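/- For the lattice x(s) = C₁q^s + C₂q^(−s) + C₃ and any natural number n ≥ 1, the (n−1)-fold forward difference derivative of x(s)^n satisfies Δ^(n−1) x^n(s) = [n]_q!·x_{n−1}(s) + C₃·[n−1]_q!·(n − [n]_q), where Δ^(k) is the k-fold operator Δ/Δx_{k−1}(s) ∘ ⋯ ∘ Δ/Δx(s), x_k(s) = x(s + k/2), [n]_q! = [1]_q[2]_q⋯[n]_q, and (Δ/Δx_k(s)) f(s) = (f(s+1) − f(s))/(x_k(s+1) − x_k(s)). -/
import Mathlib

noncomputable def qnum (q k : ℝ) : ℝ :=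
  (q ^ (k / 2) - q ^ (-k / 2)) / (q ^ ((1 : ℝ) / 2) - q ^ (-(1 : ℝ) / 2))

/-- q-factorial [n]_q! = [1]_q [2]_q ⋯ [n]_q. -/
noncomputable def qfact (q : ℝ) (n : ℕ) : ℝ :=
  ∏ j ∈ Finset.range n, qnum q ((j : ℝ) + 1)

/-- The divided difference operator Δ/Δx_k(s). -/
noncomputable def divDiff (x : ℝ → ℝ) (k : ℕ) (f : ℝ → ℝ) : ℝ → ℝ := fun s =>
  (f (s + 1) - f s) / (x (s + (k : ℝ) / 2 + 1) - x (s + (k : ℝ) / 2))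

/-- The iterated operator Δ^(k) = (Δ/Δx_{k-1}) ∘ ⋯ ∘ (Δ/Δx_0). -/
noncomputable def iterDiff (x : ℝ → ℝ) : ℕ → (ℝ → ℝ) → (ℝ → ℝ)
  | 0, f => f
  | (k + 1), f => divDiff x k (iterDiff x k f)

open Finset

noncomputable def Phi (q C1 C2 : ℝ) (m : ℕ) (t : ℝ) : ℝ :=
  if m = 0 then 1 else (C1 * q ^ t) ^ m + (C2 * q ^ (-t)) ^ m

noncomputable def gf (q C1 C2 : ℝ) (m : ℕ) (t : ℝ) : ℝ :=
  ∑ i ∈ Finset.range (m + 1), (C1 * q ^ t) ^ i * (C2 * q ^ (-t)) ^ (m - i)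

lemma sq_root (q : ℝ) (hq : 0 < q) : q ^ ((1:ℝ)/2) * q ^ ((1:ℝ)/2) = q := by
  rw [← Real.rpow_add hq]; norm_num

lemma root_ne (q : ℝ) (hq : 0 < q) (hq1 : q ≠ 1) :
    q ^ ((1:ℝ)/2) - (q ^ ((1:ℝ)/2))⁻¹ ≠ 0 := by
  intro h
  have hr : 0 < q ^ ((1:ℝ)/2) := Real.rpow_pos_of_pos hq _
  have h2 : q ^ ((1:ℝ)/2) = (q ^ ((1:ℝ)/2))⁻¹ := sub_eq_zero.mp h
  have h3 : q ^ ((1:ℝ)/2) * q ^ ((1:ℝ)/2) = 1 := by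
    nth_rewrite 2 [h2]; field_simp
  rw [sq_root q hq] at h3
  exact hq1 h3

lemma qnum_cast (q : ℝ) (hq : 0 < q) (m : ℕ) :
    qnum q ((m : ℝ)) = ((q ^ ((1:ℝ)/2)) ^ m - ((q ^ ((1:ℝ)/2))⁻¹) ^ m) /
      (q ^ ((1:ℝ)/2) - (q ^ ((1:ℝ)/2))⁻¹) := by
  unfold qnum
  have h1 : q ^ ((m:ℝ)/2) = (q ^ ((1:ℝ)/2)) ^ m := by
    rw [← Real.rpow_natCast (q ^ ((1:ℝ)/2)) m, ← Real.rpow_mul (le_of_lt hq)]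
    ring_nf
  have h2 : q ^ (-(m:ℝ)/2) = ((q ^ ((1:ℝ)/2))⁻¹) ^ m := by
    rw [inv_pow, neg_div, Real.rpow_neg (le_of_lt hq), h1]
  have h3 : q ^ (-(1:ℝ)/2) = (q ^ ((1:ℝ)/2))⁻¹ := by
    rw [neg_div, Real.rpow_neg (le_of_lt hq)]
  rw [h1, h2, h3]

lemma phi_diff (q C1 C2 : ℝ) (hq : 0 < q) (hq1 : q ≠ 1) (m : ℕ) (t : ℝ) :
    Phi q C1 C2 (m+1) (t+1) - Phi q C1 C2 (m+1) t
    = qnum q ((m:ℝ)+1) * gf q C1 C2 m (t + 1/2) *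
      ((C1 * q ^ (t+1) + C2 * q ^ (-(t+1))) - (C1 * q ^ t + C2 * q ^ (-t))) := by
  set r := q ^ ((1:ℝ)/2) with hrdef
  have hr : 0 < r := Real.rpow_pos_of_pos hq _
  have hrne : r - r⁻¹ ≠ 0 := root_ne q hq hq1
  set α := C1 * q ^ (t + 1/2) with hα
  set β := C2 * q ^ (-(t + 1/2)) with hβ
  have hrinv : q ^ (-((1:ℝ)/2)) = r⁻¹ := by
    rw [hrdef, Real.rpow_neg (le_of_lt hq)]
  have e1 : q ^ (t+1) = q ^ (t + 1/2) * r := by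
    rw [hrdef, ← Real.rpow_add hq]; congr 1; ring
  have e2 : q ^ t = q ^ (t + 1/2) * r⁻¹ := by
    rw [← hrinv, ← Real.rpow_add hq]; congr 1; ring
  have e3 : q ^ (-(t+1)) = q ^ (-(t + 1/2)) * r⁻¹ := by
    rw [← hrinv, ← Real.rpow_add hq]; congr 1; ring
  have e4 : q ^ (-t) = q ^ (-(t + 1/2)) * r := by
    rw [hrdef, ← Real.rpow_add hq]; congr 1; ring
  have hqn : qnum q ((m:ℝ)+1) = (r ^ (m+1) - (r⁻¹) ^ (m+1)) / (r - r⁻¹) := by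
    have h := qnum_cast q hq (m+1)
    push_cast at h
    rw [h]
  have hgf : gf q C1 C2 m (t + 1/2) = ∑ i ∈ range (m+1), α ^ i * β ^ (m - i) := rfl
  have hg : gf q C1 C2 m (t + 1/2) * (α - β) = α ^ (m+1) - β ^ (m+1) := by
    rw [hgf]
    simpa using geom_sum₂_mul α β (m+1)
  have expand : Phi q C1 C2 (m+1) (t+1) - Phi q C1 C2 (m+1) t
      = (r ^ (m+1) - (r⁻¹) ^ (m+1)) * (α ^ (m+1) - β ^ (m+1)) := by
    simp only [Phi, Nat.succ_ne_zero, if_false, e1, e2, e3, e4]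
    rw [show C1 * (q ^ (t + 1/2) * r) = α * r by rw [hα]; ring,
        show C2 * (q ^ (-(t + 1/2)) * r⁻¹) = β * r⁻¹ by rw [hβ]; ring,
        show C1 * (q ^ (t + 1/2) * r⁻¹) = α * r⁻¹ by rw [hα]; ring,
        show C2 * (q ^ (-(t + 1/2)) * r) = β * r by rw [hβ]; ring]
    rw [mul_pow, mul_pow, mul_pow, mul_pow]; ring
  have hden : (C1 * q ^ (t+1) + C2 * q ^ (-(t+1))) - (C1 * q ^ t + C2 * q ^ (-t))
      = (r - r⁻¹) * (α - β) := by
    rw [e1, e2, e3, e4, hα, hβ]; ring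
  rw [expand, hden, hqn, div_mul_eq_mul_div, div_mul_eq_mul_div, eq_div_iff hrne, ← hg]
  ring

lemma step_sum (q C1 C2 C3 : ℝ) (hq : 0 < q) (hq1 : q ≠ 1) (x : ℝ → ℝ)
    (hx : ∀ s, x s = C1 * q ^ s + C2 * q ^ (-s) + C3)
    (hinj : ∀ (k : ℕ) (s : ℝ), x (s + (k : ℝ) / 2 + 1) ≠ x (s + (k : ℝ) / 2))
    (M k : ℕ) (b : ℕ → ℝ) (s : ℝ) :
    divDiff x k (fun u => ∑ m ∈ range (M+1), b m * Phi q C1 C2 m (u + (k:ℝ)/2)) s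
    = ∑ m ∈ range M,
        b (m+1) * (qnum q ((m:ℝ)+1) * gf q C1 C2 m (s + ((k:ℝ)+1)/2)) := by
  have hD : x (s + (k:ℝ)/2 + 1) - x (s + (k:ℝ)/2) ≠ 0 := sub_ne_zero.2 (hinj k s)
  have key : ∀ i : ℕ,
      b (i+1) * Phi q C1 C2 (i+1) (s + 1 + (k:ℝ)/2)
        - b (i+1) * Phi q C1 C2 (i+1) (s + (k:ℝ)/2)
      = (b (i+1) * (qnum q ((i:ℝ)+1) * gf q C1 C2 i (s + ((k:ℝ)+1)/2)))
          * (x (s + (k:ℝ)/2 + 1) - x (s + (k:ℝ)/2)) := by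
    intro i
    have h := phi_diff q C1 C2 hq hq1 i (s + (k:ℝ)/2)
    have harg1 : s + 1 + (k:ℝ)/2 = s + (k:ℝ)/2 + 1 := by ring
    have harg2 : s + (k:ℝ)/2 + 1/2 = s + ((k:ℝ)+1)/2 := by ring
    have hden2 : (C1 * q ^ (s + (k:ℝ)/2 + 1) + C2 * q ^ (-(s + (k:ℝ)/2 + 1)))
        - (C1 * q ^ (s + (k:ℝ)/2) + C2 * q ^ (-(s + (k:ℝ)/2)))
        = x (s + (k:ℝ)/2 + 1) - x (s + (k:ℝ)/2) := by
      rw [hx, hx]; ring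
    rw [harg2, hden2] at h
    rw [harg1, ← mul_sub, h]
    ring
  simp only [divDiff]
  rw [div_eq_iff hD, ← Finset.sum_sub_distrib, Finset.sum_range_succ', Finset.sum_mul,
    Finset.sum_congr rfl (fun i _ => key i)]
  have hPhi0 : ∀ u : ℝ, Phi q C1 C2 0 u = 1 := fun u => if_pos rfl
  rw [hPhi0, hPhi0]
  ring

lemma gf_rec (q C1 C2 : ℝ) (hq : 0 < q) (m : ℕ) (t : ℝ) :
    gf q C1 C2 (m+2) t = Phi q C1 C2 (m+2) t + (C1*C2) * gf q C1 C2 m t := by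
  have hone : q ^ t * q ^ (-t) = 1 := by
    rw [← Real.rpow_add hq]; norm_num
  have huv : (C1 * q ^ t) * (C2 * q ^ (-t)) = C1 * C2 := by
    calc (C1 * q ^ t) * (C2 * q ^ (-t)) = C1 * C2 * (q ^ t * q ^ (-t)) := by ring
    _ = C1 * C2 := by rw [hone]; ring
  unfold gf Phi
  simp only [Nat.succ_ne_zero, if_false]
  rw [Finset.sum_range_succ, Finset.sum_range_succ']
  have hterm : ∀ i ∈ range (m+1),
      (C1 * q ^ t) ^ (i+1) * (C2 * q ^ (-t)) ^ (m + 2 - (i+1))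
      = (C1 * C2) * ((C1 * q ^ t) ^ i * (C2 * q ^ (-t)) ^ (m - i)) := by
    intro i hi
    have hi' : i ≤ m := by simpa [Nat.lt_succ_iff] using hi
    have : m + 2 - (i+1) = (m - i) + 1 := by omega
    rw [this, pow_succ, pow_succ, ← huv]
    ring
  rw [Finset.sum_congr rfl hterm, ← Finset.mul_sum]
  simp
  ring

lemma conv (q C1 C2 : ℝ) (hq : 0 < q) :
    ∀ M : ℕ, ∀ c : ℕ → ℝ, ∃ d : ℕ → ℝ,
      (∀ t, ∑ m ∈ range (M+1), c m * gf q C1 C2 m t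
          = ∑ m ∈ range (M+1), d m * Phi q C1 C2 m t)
      ∧ d M = c M ∧ d (M-1) = c (M-1) := by
  intro M
  induction M using Nat.strong_induction_on with
  | _ M ih =>
    match M with
    | 0 =>
      intro c
      exact ⟨c, fun t => by simp [gf, Phi], rfl, rfl⟩
    | 1 =>
      intro c
      refine ⟨c, fun t => ?_, rfl, rfl⟩
      simp only [gf, Phi, Finset.sum_range_succ, Finset.sum_range_zero, Finset.sum_range_one]
      norm_num
      exact Or.inl (by ring)
    | (M+2) =>
      intro c
      obtain ⟨d', hd', hd'top, hd'next⟩ := ih (M+1) (by omega)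
          (fun m => if m = M then c M + (C1*C2) * c (M+2) else c m)
      refine ⟨fun m => if m = M+2 then c (M+2) else d' m, fun t => ?_, by simp, ?_⟩
      · have h1 : ∑ m ∈ range (M+2+1), c m * gf q C1 C2 m t
            = (∑ m ∈ range (M+2), c m * gf q C1 C2 m t)
              + c (M+2) * (Phi q C1 C2 (M+2) t + (C1*C2) * gf q C1 C2 M t) := by
          rw [Finset.sum_range_succ, gf_rec q C1 C2 hq]
        have h2 : ∑ m ∈ range (M+2),
              (fun m => if m = M then c M + (C1*C2) * c (M+2) else c m) m * gf q C1 C2 m t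
            = (∑ m ∈ range (M+2), c m * gf q C1 C2 m t)
              + (C1*C2) * c (M+2) * gf q C1 C2 M t := by
          have split : ∀ m ∈ range (M+2),
              (if m = M then c M + (C1*C2) * c (M+2) else c m) * gf q C1 C2 m t
              = c m * gf q C1 C2 m t
                + (if m = M then (C1*C2) * c (M+2) * gf q C1 C2 m t else 0) := by
            intro m hm
            by_cases h : m = M
            · subst h; simp; ring
            · simp [h]
          rw [Finset.sum_congr rfl split, Finset.sum_add_distrib]
          congr 1
          rw [Finset.sum_ite_eq' (range (M+2)) M]
          simp [Nat.lt_succ_iff]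
        have h3 : ∑ m ∈ range (M+2+1),
              (fun m => if m = M+2 then c (M+2) else d' m) m * Phi q C1 C2 m t
            = (∑ m ∈ range (M+2), d' m * Phi q C1 C2 m t)
              + c (M+2) * Phi q C1 C2 (M+2) t := by
          rw [Finset.sum_range_succ]
          congr 1
          · refine Finset.sum_congr rfl (fun m hm => ?_)
            have : m ≠ M+2 := by simp [Nat.lt_succ_iff] at hm; omega
            simp [this]
          · simp
        rw [h1, h3, ← hd' t, h2]
        ring
      · have hne : M + 2 - 1 ≠ M + 2 := by omega
        simp only [hne, if_false]
        have : M + 2 - 1 = M + 1 := by omega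
        rw [this, hd'top]
        have : M + 1 ≠ M := by omega
        simp [this]

lemma phi_mul (q C1 C2 : ℝ) (hq : 0 < q) (m : ℕ) (t : ℝ) :
    Phi q C1 C2 m t * Phi q C1 C2 1 t
    = Phi q C1 C2 (m+1) t + (C1*C2) *
        (if m = 0 then 0 else if m = 1 then 2 else Phi q C1 C2 (m-1) t) := by
  have hone : q ^ t * q ^ (-t) = 1 := by rw [← Real.rpow_add hq]; norm_num
  have huv : (C1 * q ^ t) * (C2 * q ^ (-t)) = C1 * C2 := by
    calc (C1 * q ^ t) * (C2 * q ^ (-t)) = C1 * C2 * (q ^ t * q ^ (-t)) := by ring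
    _ = C1 * C2 := by rw [hone]; ring
  match m with
  | 0 => simp [Phi]
  | 1 =>
    simp only [Phi, if_neg (one_ne_zero), if_neg (by norm_num : (2:ℕ) ≠ 0), if_pos rfl]
    norm_num
    rw [← huv]; ring
  | (m+2) =>
    simp only [Phi, if_neg (Nat.succ_ne_zero _), Nat.add_sub_cancel,
      if_neg (by omega : m + 2 ≠ 0), if_neg (by omega : m + 2 ≠ 1)]
    have h1 : m + 2 - 1 = m + 1 := by omega
    rw [h1]
    simp only [Phi, if_neg (Nat.succ_ne_zero _)]
    rw [← huv]; ring

lemma expand_pow (q C1 C2 C3 : ℝ) (hq : 0 < q) :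
    ∀ j : ℕ, 1 ≤ j → ∃ e : ℕ → ℝ,
      (∀ t, (Phi q C1 C2 1 t + C3) ^ j = ∑ m ∈ range (j+1), e m * Phi q C1 C2 m t)
      ∧ e j = 1 ∧ e (j-1) = (j:ℝ) * C3 ∧ (∀ m, j < m → e m = 0) := by
  intro j hj
  induction j, hj using Nat.le_induction with
  | base =>
    refine ⟨fun m => if m = 0 then C3 else if m = 1 then 1 else 0, fun t => ?_, by norm_num,
      by norm_num, fun m hm => ?_⟩
    · simp [Finset.sum_range_succ, Phi]
      ring
    · have h0 : m ≠ 0 := by omega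
      have h1 : m ≠ 1 := by omega
      simp [h0, h1]
  | succ j hj ih =>
    obtain ⟨e, hsum, etop, enext, esupp⟩ := ih
    refine ⟨fun m => C3 * e m + (if m = 0 then 0 else e (m-1))
        + (C1*C2) * (if m = 0 then 2 * e 1 else e (m+1)), fun t => ?_, ?_, ?_, ?_⟩
    · -- sum identity
      have hstep : (Phi q C1 C2 1 t + C3) ^ (j+1)
          = (∑ m ∈ range (j+1), e m * Phi q C1 C2 m t) * (Phi q C1 C2 1 t + C3) := by
        rw [pow_succ, hsum t]
      rw [hstep, mul_add, Finset.sum_mul]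
      have hprod : ∀ m ∈ range (j+1),
          e m * Phi q C1 C2 m t * Phi q C1 C2 1 t
          = e m * Phi q C1 C2 (m+1) t
            + (C1*C2) * (e m * (if m = 0 then 0 else if m = 1 then 2
                else Phi q C1 C2 (m-1) t)) := by
        intro m _
        rw [mul_assoc, phi_mul q C1 C2 hq m t]
        ring
      rw [Finset.sum_congr rfl hprod, Finset.sum_add_distrib, ← Finset.mul_sum]
      -- now goal: Σ e_m Phi_{m+1} + P * Σ e_m v_m + C3 * Σ e_m Phi_m = Σ e' Phi
      have hS1 : ∑ m ∈ range (j+1), e m * Phi q C1 C2 (m+1) t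
          = ∑ m ∈ range (j+2), (if m = 0 then 0 else e (m-1)) * Phi q C1 C2 m t := by
        rw [Finset.sum_range_succ' (fun m => (if m = 0 then 0 else e (m-1)) * Phi q C1 C2 m t) (j+1)]
        simp
      have hS2 : ∑ m ∈ range (j+1),
            e m * (if m = 0 then 0 else if m = 1 then 2 else Phi q C1 C2 (m-1) t)
          = ∑ m ∈ range (j+2), (if m = 0 then 2 * e 1 else e (m+1)) * Phi q C1 C2 m t := by
        rw [Finset.sum_range_succ' (fun m =>
          e m * (if m = 0 then 0 else if m = 1 then 2 else Phi q C1 C2 (m-1) t)) j]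
        rw [Finset.sum_range_succ (fun m => (if m = 0 then 2 * e 1 else e (m+1)) * Phi q C1 C2 m t) (j+1)]
        rw [Finset.sum_range_succ (fun m => (if m = 0 then 2 * e 1 else e (m+1)) * Phi q C1 C2 m t) j]
        have hz1 : e (j+1+1) = 0 := esupp _ (by omega)
        have hz2 : e (j+1) = 0 := esupp _ (by omega)
        have hjne : j ≠ 0 := by omega
        simp only [hz1, hz2, hjne, if_false, Nat.succ_ne_zero, Nat.add_sub_cancel]
        simp only [if_true, mul_zero, zero_mul, add_zero]
        refine Finset.sum_congr rfl (fun i _ => ?_)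
        by_cases hi : i = 0
        · subst hi; simp [Phi]
          try ring
        · have : i + 1 ≠ 1 := by omega
          simp only [hi, this, if_false]
          try ring
      have hS3 : (∑ m ∈ range (j+1), e m * Phi q C1 C2 m t) * C3
          = ∑ m ∈ range (j+2), (C3 * e m) * Phi q C1 C2 m t := by
        rw [Finset.sum_range_succ (fun m => (C3 * e m) * Phi q C1 C2 m t) (j+1),
          esupp (j+1) (by omega), Finset.sum_mul]
        simp only [mul_zero, zero_mul, add_zero]
        exact Finset.sum_congr rfl (fun i _ => by ring)
      rw [hS1, hS2, hS3, mul_sum, ← Finset.sum_add_distrib, ← Finset.sum_add_distrib]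
      exact Finset.sum_congr rfl (fun i _ => by ring)
    · -- top coefficient
      have h1 : e (j+1) = 0 := esupp _ (by omega)
      have h2 : e (j+1+1) = 0 := esupp _ (by omega)
      simp only [h1, h2, Nat.succ_ne_zero, if_false, Nat.add_sub_cancel, etop]
      ring
    · -- next coefficient
      have h1 : e (j+1) = 0 := esupp _ (by omega)
      have hjne : j ≠ 0 := by omega
      simp only [Nat.add_sub_cancel, hjne, if_false, h1, etop, enext]
      push_cast
      ring
    · -- support
      intro m hm
      have h0 : m ≠ 0 := by omega
      have h1 : e m = 0 := esupp _ (by omega)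
      have h2 : e (m-1) = 0 := esupp _ (by omega)
      have h3 : e (m+1) = 0 := esupp _ (by omega)
      simp [h0, h1, h2, h3]

lemma qnum_one (q : ℝ) (hq : 0 < q) (hq1 : q ≠ 1) : qnum q 1 = 1 := by
  have h := qnum_cast q hq 1
  rw [Nat.cast_one] at h
  rw [h, pow_one, pow_one]
  exact div_self (root_ne q hq hq1)

section Main

variable (q C1 C2 C3 : ℝ) (x : ℝ → ℝ)

lemma main_inv (hq : 0 < q) (hq1 : q ≠ 1)
    (hx : ∀ s, x s = C1 * q ^ s + C2 * q ^ (-s) + C3)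
    (hinj : ∀ (k : ℕ) (s : ℝ), x (s + (k : ℝ) / 2 + 1) ≠ x (s + (k : ℝ) / 2))
    (n : ℕ) :
    ∀ k : ℕ, k + 2 ≤ n → ∃ b : ℕ → ℝ,
      (∀ s, iterDiff x k (fun t => x t ^ n) s
          = ∑ m ∈ range (n - k + 1), b m * Phi q C1 C2 m (s + (k:ℝ)/2))
      ∧ b (n-k) = ∏ j ∈ range k, qnum q ((n:ℝ) - j)
      ∧ b (n-k-1) = (n:ℝ) * C3 * ∏ j ∈ range k, qnum q ((n:ℝ) - 1 - j) := by
  intro k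
  induction k with
  | zero =>
    intro h2
    obtain ⟨e, hsum, etop, enext, _⟩ := expand_pow q C1 C2 C3 hq n (by omega)
    refine ⟨e, fun s => ?_, by simpa using etop, by simpa using enext⟩
    have hx1 : x s = Phi q C1 C2 1 s + C3 := by
      rw [hx]; simp [Phi]
    show (x s) ^ n = _
    rw [hx1, hsum s]
    simp
  | succ k ihk =>
    intro h2
    have hk2 : k + 2 ≤ n := by omega
    obtain ⟨b, hsum, btop, bnext⟩ := ihk hk2
    have hM : n - k = (n - k - 1) + 1 := by omega
    set M := n - k - 1 with hMdef
    have hfun : iterDiff x k (fun t => x t ^ n)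
        = fun u => ∑ m ∈ range ((M+1)+1), b m * Phi q C1 C2 m (u + (k:ℝ)/2) := by
      funext u
      rw [hsum u]
      congr 2
      omega
    obtain ⟨d, hd, hdtop, hdnext⟩ := conv q C1 C2 hq M (fun m => b (m+1) * qnum q ((m:ℝ)+1))
    refine ⟨d, fun s => ?_, ?_, ?_⟩
    · show divDiff x k (iterDiff x k (fun t => x t ^ n)) s = _
      rw [hfun, step_sum q C1 C2 C3 hq hq1 x hx hinj (M+1) k b s]
      have hc : ∀ m ∈ range (M+1),
          b (m+1) * (qnum q ((m:ℝ)+1) * gf q C1 C2 m (s + ((k:ℝ)+1)/2))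
          = (b (m+1) * qnum q ((m:ℝ)+1)) * gf q C1 C2 m (s + ((k:ℝ)+1)/2) := by
        intro m _; ring
      rw [Finset.sum_congr rfl hc, hd (s + ((k:ℝ)+1)/2)]
      have hrange : n - (k+1) + 1 = M + 1 := by omega
      rw [hrange]
      refine Finset.sum_congr rfl (fun m _ => ?_)
      congr 2
      push_cast
      ring
    · have hkn : k ≤ n := by omega
      have hMc : ((M:ℕ):ℝ) = (n:ℝ) - ↑k - 1 := by
        rw [hMdef, Nat.cast_sub (by omega : 1 ≤ n - k), Nat.cast_sub hkn]
        norm_num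
      rw [show n - (k+1) = M from by omega, hdtop,
        show M + 1 = n - k from by omega, btop,
        show (M:ℝ) + 1 = (n:ℝ) - ↑k from by rw [hMc]; ring,
        Finset.prod_range_succ]
    · have hkn : k ≤ n := by omega
      have hMc : ((M:ℕ):ℝ) = (n:ℝ) - ↑k - 1 := by
        rw [hMdef, Nat.cast_sub (by omega : 1 ≤ n - k), Nat.cast_sub hkn]
        norm_num
      rw [show n - (k+1) - 1 = M - 1 from by omega, hdnext,
        show M - 1 + 1 = M from by omega, bnext,
        show ((M - 1 : ℕ):ℝ) + 1 = (n:ℝ) - 1 - ↑k from by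
          rw [Nat.cast_sub (by omega : 1 ≤ M), hMc]; ring,
        Finset.prod_range_succ]
      ring

end Main

theorem iterDiff_pow_n (q C₁ C₂ C₃ : ℝ) (hq : 0 < q) (hq1 : q ≠ 1)
    (x : ℝ → ℝ) (hx : ∀ s, x s = C₁ * q ^ s + C₂ * q ^ (-s) + C₃)
    (hinj : ∀ (k : ℕ) (s : ℝ), x (s + (k : ℝ) / 2 + 1) ≠ x (s + (k : ℝ) / 2))
    (n : ℕ) (hn : 1 ≤ n) (s : ℝ) :
    iterDiff x (n - 1) (fun t => (x t) ^ n) s =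
      qfact q n * x (s + ((n : ℝ) - 1) / 2)
        + C₃ * qfact q (n - 1) * ((n : ℝ) - qnum q (n : ℝ)) := by
  rcases Nat.lt_or_ge n 2 with hn2 | hn2
  · obtain rfl : n = 1 := by omega
    show x s ^ 1 = _
    have harg : s + (((1:ℕ):ℝ) - 1)/2 = s := by norm_num
    rw [harg, pow_one]
    have h1 : qfact q 1 = 1 := by
      simp [qfact, Finset.prod_range_one]
      norm_num [qnum_one q hq hq1]
    have h0 : qfact q 0 = 1 := by simp [qfact]
    have hq1' : qnum q ((1:ℕ):ℝ) = 1 := by norm_num [qnum_one q hq hq1]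
    rw [show (1:ℕ) - 1 = 0 from rfl, h1, h0, hq1']
    norm_num
  · obtain ⟨m, rfl⟩ : ∃ m, n = m + 2 := ⟨n - 2, by omega⟩
    obtain ⟨b, hsum, btop, bnext⟩ := main_inv q C₁ C₂ C₃ x hq hq1 hx hinj (m+2) m (by omega)
    rw [show m + 2 - m = 2 from by omega] at btop
    rw [show m + 2 - m - 1 = 1 from by omega] at bnext
    have hfun : iterDiff x m (fun t => x t ^ (m+2))
        = fun u => ∑ mm ∈ range (2+1), b mm * Phi q C₁ C₂ mm (u + (m:ℝ)/2) := by
      funext u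
      rw [hsum u]
      congr 2
      omega
    have hiter : iterDiff x (m+2-1) (fun t => x t ^ (m+2))
        = divDiff x m (iterDiff x m (fun t => x t ^ (m+2))) := by
      rw [show m+2-1 = m+1 from by omega]
      rfl
    rw [hiter, hfun, step_sum q C₁ C₂ C₃ hq hq1 x hx hinj 2 m b s,
      Finset.sum_range_succ, Finset.sum_range_one]
    set τ := s + ((m:ℝ)+1)/2 with hτdef
    have hgf0 : gf q C₁ C₂ 0 τ = 1 := by simp [gf]
    have hgf1 : gf q C₁ C₂ 1 τ = C₂ * q ^ (-τ) + C₁ * q ^ τ := by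
      simp [gf, Finset.sum_range_succ]
    have hτ' : s + ((↑(m+2):ℝ) - 1)/2 = τ := by rw [hτdef]; push_cast; ring
    have hxτ : x (s + ((↑(m+2):ℝ) - 1)/2) = C₂ * q ^ (-τ) + C₁ * q ^ τ + C₃ := by
      rw [hτ', hx]; ring
    have gen2 : ∀ (f : ℕ → ℝ) (M : ℕ),
        ∏ j ∈ range (M+2), f j = f 0 * f 1 * ∏ j ∈ range M, f (j+2) := by
      intro f M
      rw [Finset.prod_range_succ' f (M+1), Finset.prod_range_succ' (fun j => f (j+1)) M]
      ring
    have gen1 : ∀ (f : ℕ → ℝ) (M : ℕ),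
        ∏ j ∈ range (M+1), f j = f 0 * ∏ j ∈ range M, f (j+1) := by
      intro f M
      rw [Finset.prod_range_succ' f M]
      ring
    have hrefl2 : ∏ j ∈ range m, qnum q ((↑(m+2):ℝ) - ↑j)
        = ∏ j ∈ range m, qnum q ((j:ℝ)+3) := by
      rw [← Finset.prod_range_reflect (fun j => qnum q ((j:ℝ)+3)) m]
      refine Finset.prod_congr rfl (fun j hj => ?_)
      have hj' : j < m := Finset.mem_range.mp hj
      congr 1
      rw [Nat.cast_sub (by omega : j ≤ m - 1), Nat.cast_sub (by omega : 1 ≤ m)]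
      push_cast
      ring
    have hrefl1 : ∏ j ∈ range m, qnum q ((↑(m+2):ℝ) - 1 - ↑j)
        = ∏ j ∈ range m, qnum q ((j:ℝ)+2) := by
      rw [← Finset.prod_range_reflect (fun j => qnum q ((j:ℝ)+2)) m]
      refine Finset.prod_congr rfl (fun j hj => ?_)
      have hj' : j < m := Finset.mem_range.mp hj
      congr 1
      rw [Nat.cast_sub (by omega : j ≤ m - 1), Nat.cast_sub (by omega : 1 ≤ m)]
      push_cast
      ring
    have P1 : qfact q (m+2) = qnum q 2 * ∏ j ∈ range m, qnum q ((j:ℝ)+3) := by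
      unfold qfact
      rw [gen2 (fun j => qnum q ((j:ℝ)+1)) m]
      rw [show qnum q (((0:ℕ):ℝ)+1) = 1 from by norm_num [qnum_one q hq hq1]]
      rw [show qnum q (((1:ℕ):ℝ)+1) = qnum q 2 from by norm_num]
      rw [Finset.prod_congr rfl (fun j _ => by push_cast; ring_nf :
        ∀ j ∈ range m, qnum q ((↑(j+2):ℝ)+1) = qnum q ((j:ℝ)+3))]
      ring
    have P3 : qfact q (m+1) = ∏ j ∈ range m, qnum q ((j:ℝ)+2) := by
      unfold qfact
      rw [gen1 (fun j => qnum q ((j:ℝ)+1)) m]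
      rw [show qnum q (((0:ℕ):ℝ)+1) = 1 from by norm_num [qnum_one q hq hq1]]
      rw [Finset.prod_congr rfl (fun j _ => by push_cast; ring_nf :
        ∀ j ∈ range m, qnum q ((↑(j+1):ℝ)+1) = qnum q ((j:ℝ)+2))]
      ring
    have P4 : qfact q (m+2) = qfact q (m+1) * qnum q ((↑(m+2):ℝ)) := by
      unfold qfact
      rw [Finset.prod_range_succ (fun j => qnum q ((j:ℝ)+1)) (m+1)]
      congr 2
      push_cast
      ring
    have e2 : qnum q 2 * ∏ j ∈ range m, qnum q ((↑(m+2):ℝ) - ↑j) = qfact q (m+2) := by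
      rw [hrefl2, P1]
    have e3 : ∏ j ∈ range m, qnum q ((↑(m+2):ℝ) - 1 - ↑j) = qfact q (m+1) := by
      rw [hrefl1, P3]
    rw [show m + 2 - 1 = m + 1 from by omega, hxτ, hgf0, hgf1, btop, bnext,
      show qnum q (((0:ℕ):ℝ)+1) = 1 from by norm_num [qnum_one q hq hq1],
      show qnum q (((1:ℕ):ℝ)+1) = qnum q 2 from by norm_num,
      e3]
    rw [show (∏ j ∈ range m, qnum q ((↑(m+2):ℝ) - ↑j)) * (qnum q 2 * (C₂ * q ^ (-τ) + C₁ * q ^ τ))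
        = (qnum q 2 * ∏ j ∈ range m, qnum q ((↑(m+2):ℝ) - ↑j)) * (C₂ * q ^ (-τ) + C₁ * q ^ τ)
      from by ring, e2, P4]
    ring
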